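/- arXiv:hep-th/9403100 — 2 statements merged into one kernel-verified Lean document; each statement's English description precedes it below -/
import Mathlib

section
/- Every element x of a coalgebra C over a field k is contained in a finite-dimensional subcomodule of C (C being regarded as a right comodule over itself with structure map Δ); consequently every right C-comodule is locally finite-dimensional, i.e. every element of a comodule lies in a finite-dimensional subcomodule. -/
/-!
For `v` in a comodule `(V, β)`, let `W` be the span of the slices `(id ⊗ f)(β v)`, `f ∈ C*`.
Expanding `β v = ∑ mᵢ ⊗ bᵢ` in a basis of `C` shows that `W` is spanned by the finitely many
`mᵢ` and that `β v ∈ W ⊗ C`. The counit axiom gives `v = (id ⊗ ε)(β v) ∈ W`, and slicing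
coassociativity in its last factor gives `β ((id ⊗ f)(β v)) = (id ⊗ (id ⊗ f) ∘ Δ)(β v)`,
which lies in `W ⊗ C`; so `W` is a subcomodule. The coalgebra itself is the comodule `(C, Δ)`.
-/

open TensorProduct

namespace SuperCoalg

variable {k : Type} [Field k]
variable {C : Type} [AddCommGroup C] [Module k C] [Coalgebra k C]

/-- `β : V →ₗ[k] V ⊗[k] C` is a (right) comodule structure map over the coalgebra `C`. -/
structure IsComodule {V : Type} [AddCommGroup V] [Module k V]
    (β : V →ₗ[k] V ⊗[k] C) : Prop where
  coassoc : (TensorProduct.assoc k V C C).toLinearMap ∘ₗ β.rTensor C ∘ₗ β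
      = LinearMap.lTensor V (Coalgebra.comul (R := k) (A := C)) ∘ₗ β
  counit_id : (TensorProduct.rid k V).toLinearMap ∘ₗ
      LinearMap.lTensor V (Coalgebra.counit (R := k) (A := C)) ∘ₗ β = LinearMap.id

/-- A submodule `W ≤ V` is a subcomodule for the structure map `β`, i.e. the coaction
restricts to `W`: the image of `W` lies in `W ⊗ C`. -/
def IsSubcomodule {V : Type} [AddCommGroup V] [Module k V]
    (β : V →ₗ[k] V ⊗[k] C) (W : Submodule k V) : Prop :=
  ∀ w ∈ W, β w ∈ LinearMap.range (W.subtype.rTensor C)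

section Slices

variable {R : Type*} [CommRing R]
variable {V D E : Type*} [AddCommGroup V] [Module R V] [AddCommGroup D] [Module R D]
  [AddCommGroup E] [Module R E]

def sliceRight (f : D →ₗ[R] R) : V ⊗[R] D →ₗ[R] V :=
  (TensorProduct.rid R V).toLinearMap ∘ₗ f.lTensor V

@[simp]
lemma sliceRight_tmul (f : D →ₗ[R] R) (x : V) (d : D) :
    sliceRight f (x ⊗ₜ[R] d) = f d • x := by
  simp [sliceRight]

lemma sliceRight_sum_tmul_basis {ι : Type*} (b : Module.Basis ι R D) (m : ι →₀ V) (j : ι) :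
    sliceRight (b.coord j) (m.sum fun i x => x ⊗ₜ[R] b i) = m j := by
  classical
  simp [Finsupp.sum, Finsupp.single_apply, eq_comm]

lemma lTensor_sliceRight_assoc_rTensor (β : V →ₗ[R] V ⊗[R] D) (f : E →ₗ[R] R)
    (z : V ⊗[R] E) :
    (sliceRight f).lTensor V (TensorProduct.assoc R V D E (β.rTensor E z)) =
      β (sliceRight f z) := by
  induction z using TensorProduct.induction_on with
  | zero => simp
  | add z₁ z₂ h₁ h₂ => simp only [map_add, h₁, h₂]
  | tmul x e =>
    rw [LinearMap.rTensor_tmul, sliceRight_tmul, map_smul]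
    induction β x using TensorProduct.induction_on with
    | zero => simp
    | add y₁ y₂ h₁ h₂ => rw [add_tmul, map_add, map_add, h₁, h₂, smul_add]
    | tmul y d => simp [TensorProduct.smul_tmul']

lemma lTensor_mem_range_rTensor {W : Submodule R V} {z : V ⊗[R] D}
    (hz : z ∈ LinearMap.range (W.subtype.rTensor D)) (g : D →ₗ[R] E) :
    g.lTensor V z ∈ LinearMap.range (W.subtype.rTensor E) := by
  obtain ⟨y, rfl⟩ := hz
  exact ⟨g.lTensor W y, by rw [← LinearMap.comp_apply, ← LinearMap.comp_apply,
    LinearMap.rTensor_comp_lTensor, LinearMap.lTensor_comp_rTensor]⟩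

def sliceSpan (z : V ⊗[R] D) : Submodule R V :=
  Submodule.span R (Set.range fun f : Module.Dual R D => sliceRight f z)

lemma mem_range_rTensor_sliceSpan [Module.Free R D] (z : V ⊗[R] D) :
    z ∈ LinearMap.range ((sliceSpan z).subtype.rTensor D) := by
  set b := Module.Free.chooseBasis R D
  obtain ⟨m, rfl⟩ := TensorProduct.eq_repr_basis_right b z
  have hmem : ∀ i, m i ∈ sliceSpan (m.sum fun i x => x ⊗ₜ[R] b i) := fun i =>
    Submodule.subset_span ⟨b.coord i, sliceRight_sum_tmul_basis b m i⟩
  exact Submodule.sum_mem _ fun i _ => ⟨⟨m i, hmem i⟩ ⊗ₜ[R] b i, rfl⟩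

end Slices

lemma finiteDimensional_sliceSpan {V D : Type*} [AddCommGroup V] [Module k V]
    [AddCommGroup D] [Module k D] (z : V ⊗[k] D) : FiniteDimensional k (sliceSpan z) := by
  obtain ⟨m, rfl⟩ := TensorProduct.eq_repr_basis_right (Module.Free.chooseBasis k D) z
  have hle : sliceSpan (m.sum fun i x => x ⊗ₜ[k] Module.Free.chooseBasis k D i) ≤
      Submodule.span k (m '' m.support) := by
    refine Submodule.span_le.2 ?_
    rintro _ ⟨f, rfl⟩
    simp only [Finsupp.sum, map_sum, sliceRight_tmul]
    exact Submodule.sum_mem _ fun i hi =>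
      Submodule.smul_mem _ _ (Submodule.subset_span ⟨i, hi, rfl⟩)
  have := FiniteDimensional.span_of_finite k (m.support.finite_toSet.image m)
  exact Submodule.finiteDimensional_of_le hle

theorem IsComodule.exists_finiteDimensional_subcomodule {V : Type} [AddCommGroup V]
    [Module k V] {β : V →ₗ[k] V ⊗[k] C} (hβ : IsComodule β) (v : V) :
    ∃ W : Submodule k V, IsSubcomodule β W ∧ FiniteDimensional k W ∧ v ∈ W := by
  refine ⟨sliceSpan (β v), ?_, finiteDimensional_sliceSpan _, ?_⟩
  · have hcoassoc := LinearMap.congr_fun hβ.coassoc v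
    simp only [LinearMap.comp_apply, LinearEquiv.coe_coe] at hcoassoc
    suffices sliceSpan (β v) ≤
        (LinearMap.range ((sliceSpan (β v)).subtype.rTensor C)).comap β from
      fun w hw => this hw
    refine Submodule.span_le.2 ?_
    rintro _ ⟨f, rfl⟩
    rw [SetLike.mem_coe, Submodule.mem_comap, ← lTensor_sliceRight_assoc_rTensor, hcoassoc,
      ← LinearMap.comp_apply, ← LinearMap.lTensor_comp]
    exact lTensor_mem_range_rTensor (mem_range_rTensor_sliceSpan _) _
  · exact Submodule.subset_span ⟨Coalgebra.counit, LinearMap.congr_fun hβ.counit_id v⟩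

lemma isComodule_comul : IsComodule (Coalgebra.comul (R := k) (A := C)) where
  coassoc := Coalgebra.coassoc
  counit_id := by ext; simp

/-- Every element of a coalgebra `C` (viewed as a right comodule over itself via `Δ`)
lies in a finite-dimensional subcomodule; consequently every right `C`-comodule is
locally finite-dimensional. -/
theorem locally_finite_dimensional :
    (∀ x : C, ∃ W : Submodule k C,
        IsSubcomodule (Coalgebra.comul (R := k) (A := C)) W ∧
        FiniteDimensional k W ∧ x ∈ W) ∧
    (∀ (V : Type) (_ : AddCommGroup V) (_ : Module k V)
        (β : V →ₗ[k] V ⊗[k] C), IsComodule β →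
      ∀ v : V, ∃ W : Submodule k V,
        IsSubcomodule β W ∧ FiniteDimensional k W ∧ v ∈ W) :=
  ⟨isComodule_comul.exists_finiteDimensional_subcomodule,
    fun _ _ _ _ hβ => hβ.exists_finiteDimensional_subcomodule⟩

end SuperCoalg
end

section
/- Every subcomodule V of a coalgebra C is contained in the span of its coefficients: if {v_i}_{i∈I} is a basis of V and Δ(v_i) = Σ_{j∈I} v_j ⊗ a^j_i, then v_i = Σ_{j∈I} ε(v_j) a^j_i for every i; hence C is the directed union (direct limit) of the finite-dimensional coalgebras formed by the coefficients of its finite-dimensional subcomodules. -/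
/-!
Contracting the first tensor factor of `Δ w` against a functional `f` (the map `contractFst f`)
lands in every `S` with `Δ(V) ⊆ V ⊗ S`. For `f = ε` this returns `w`, so `V ⊆ coeffSpan V`;
for `f` extending the `j`-th coordinate of the basis it returns `a j i`, so `coeffSpan V` is
spanned by the coefficients, and by coassociativity `Δ (a j i) = ∑ l, a j l ⊗ a l i`, so they
span a subcoalgebra. Every `c : C` lies in a finite-dimensional subcomodule: writing
`Δ c = ∑ j, m j ⊗ B j` over a basis `B` of `C`, coassociativity and contraction of the last
factor against `B` show that the `m j` span one, and `c = ∑ j, ε (B j) • m j`.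
-/

open TensorProduct

namespace SuperCoalg

variable {k : Type} [Field k]
variable {C : Type} [AddCommGroup C] [Module k C] [Coalgebra k C]

/-- A submodule `S ≤ C` is a subcoalgebra: `Δ(S) ⊆ S ⊗ S`. -/
def IsSubcoalgebra (S : Submodule k C) : Prop :=
  ∀ x ∈ S, Coalgebra.comul (R := k) x ∈ LinearMap.range (TensorProduct.mapIncl S S)

/-- The coefficient space of a subcomodule `V ≤ C`: the smallest submodule `S` of `C`
with `Δ(V) ⊆ V ⊗ S`. -/
def coeffSpan (V : Submodule k C) : Submodule k C :=
  sInf {S : Submodule k C |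
    ∀ v ∈ V, Coalgebra.comul (R := k) v ∈ LinearMap.range (TensorProduct.mapIncl V S)}

section TensorProduct

variable {N M P : Type*} [AddCommGroup N] [Module k N] [AddCommGroup M] [Module k M]
  [AddCommGroup P] [Module k P]

noncomputable def contractFst (f : N →ₗ[k] k) : N ⊗[k] M →ₗ[k] M :=
  TensorProduct.lid k M ∘ₗ f.rTensor M

noncomputable def contractSnd (f : N →ₗ[k] k) : M ⊗[k] N →ₗ[k] M :=
  TensorProduct.rid k M ∘ₗ f.lTensor M

@[simp]
lemma contractFst_tmul (f : N →ₗ[k] k) (n : N) (m : M) :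
    contractFst f (n ⊗ₜ[k] m) = f n • m := by
  simp [contractFst]

@[simp]
lemma contractSnd_tmul (f : N →ₗ[k] k) (m : M) (n : N) :
    contractSnd f (m ⊗ₜ[k] n) = f n • m := by
  simp [contractSnd]

lemma contractFst_lTensor (f : N →ₗ[k] k) (φ : M →ₗ[k] P) (x : N ⊗[k] M) :
    contractFst f (φ.lTensor N x) = φ (contractFst f x) := by
  induction x using TensorProduct.induction_on with
  | zero => simp
  | tmul n m => simp
  | add x y hx hy => simp only [map_add, hx, hy]

lemma contractSnd_assoc_symm (f : N →ₗ[k] k) (m : M) (y : P ⊗[k] N) :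
    contractSnd f ((TensorProduct.assoc k M P N).symm (m ⊗ₜ[k] y)) =
      m ⊗ₜ[k] contractSnd f y := by
  induction y using TensorProduct.induction_on with
  | zero => simp
  | tmul p n => simp
  | add x y hx hy => simp only [tmul_add, map_add, hx, hy]

lemma contractFst_sum_tmul {ι : Type*} [DecidableEq ι] {e : ι → N} {f : N →ₗ[k] k} {j : ι}
    (hf : ∀ l, f (e l) = if l = j then 1 else 0) (s : Finset ι) (m : ι → M) :
    contractFst f (∑ l ∈ s, e l ⊗ₜ[k] m l) = if j ∈ s then m j else 0 := by
  simp [hf, ite_smul]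

lemma contractSnd_sum_tmul {ι : Type*} [DecidableEq ι] {e : ι → N} {f : N →ₗ[k] k} {j : ι}
    (hf : ∀ l, f (e l) = if l = j then 1 else 0) (s : Finset ι) (m : ι → M) :
    contractSnd f (∑ l ∈ s, m l ⊗ₜ[k] e l) = if j ∈ s then m j else 0 := by
  simp [hf, ite_smul]

lemma contractFst_mem_of_mem_range_mapIncl {W : Submodule k N} {S : Submodule k M}
    (f : N →ₗ[k] k) {x : N ⊗[k] M} (hx : x ∈ LinearMap.range (mapIncl W S)) :
    contractFst f x ∈ S := by
  obtain ⟨y, rfl⟩ := hx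
  have : contractFst f ∘ₗ mapIncl W S = S.subtype ∘ₗ contractFst (f ∘ₗ W.subtype) := by
    ext; simp
  rw [← LinearMap.comp_apply, this]
  exact (contractFst _ y).2

lemma tmul_mem_range_mapIncl {W : Submodule k N} {S : Submodule k M} {x : N} {y : M}
    (hx : x ∈ W) (hy : y ∈ S) : x ⊗ₜ[k] y ∈ LinearMap.range (mapIncl W S) :=
  ⟨⟨x, hx⟩ ⊗ₜ ⟨y, hy⟩, rfl⟩

lemma exists_eq_sum_basis_tmul {ι : Type*} (b : Module.Basis ι k N) (x : N ⊗[k] M) :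
    ∃ (s : Finset ι) (m : ι → M), x = ∑ j ∈ s, b j ⊗ₜ[k] m j := by
  classical
  refine ⟨(equivFinsuppOfBasisLeft b x).support, equivFinsuppOfBasisLeft b x, ?_⟩
  conv_lhs => rw [← (equivFinsuppOfBasisLeft b).symm_apply_apply x]
  rw [equivFinsuppOfBasisLeft_symm_apply]
  rfl

lemma exists_eq_sum_tmul_basis {ι : Type*} (b : Module.Basis ι k N) (x : M ⊗[k] N) :
    ∃ (s : Finset ι) (m : ι → M), x = ∑ j ∈ s, m j ⊗ₜ[k] b j := by
  classical
  refine ⟨(equivFinsuppOfBasisRight b x).support, equivFinsuppOfBasisRight b x, ?_⟩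
  conv_lhs => rw [← (equivFinsuppOfBasisRight b).symm_apply_apply x]
  rw [equivFinsuppOfBasisRight_symm_apply]
  rfl

lemma exists_extend_coord {V : Submodule k N} {ι : Type*} [DecidableEq ι]
    (b : Module.Basis ι k V) (j : ι) :
    ∃ f : N →ₗ[k] k, ∀ l, f (b l) = if l = j then 1 else 0 := by
  obtain ⟨f, hf⟩ := LinearMap.exists_extend (b.coord j)
  exact ⟨f, fun l => by rw [← b.repr_self_apply, ← b.coord_apply, ← hf]; rfl⟩

lemma range_rTensor_subtype_mono {W₁ W₂ : Submodule k N} (h : W₁ ≤ W₂) :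
    LinearMap.range (W₁.subtype.rTensor M) ≤ LinearMap.range (W₂.subtype.rTensor M) :=
  TensorProduct.range_map_mono (by simpa) le_rfl

end TensorProduct

lemma contractFst_counit_comul (x : C) :
    contractFst (Coalgebra.counit (R := k)) (Coalgebra.comul (R := k) x) = x := by
  simp [contractFst]

lemma contractSnd_counit_comul (x : C) :
    contractSnd (Coalgebra.counit (R := k)) (Coalgebra.comul (R := k) x) = x := by
  simp [contractSnd]

lemma le_coeffSpan (V : Submodule k C) : V ≤ coeffSpan V := fun v hv =>
  Submodule.mem_sInf.2 fun _ hS =>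
    contractFst_counit_comul (k := k) v ▸ contractFst_mem_of_mem_range_mapIncl _ (hS v hv)

section Coefficients

variable {V : Submodule k C} {ι : Type} {b : Module.Basis ι k V} {s : ι → Finset ι}
  {a : ι → ι → C}

lemma eq_sum_counit_smul_coeff
    (ha : ∀ i, Coalgebra.comul (R := k) (b i : C) = ∑ j ∈ s i, (b j : C) ⊗ₜ[k] a j i) (i : ι) :
    (b i : C) = ∑ j ∈ s i, Coalgebra.counit (R := k) (b j : C) • a j i := by
  conv_lhs => rw [← contractFst_counit_comul (k := k) (b i : C), ha i]
  simp

lemma comul_mem_range_mapIncl_span_coeff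
    (ha : ∀ i, Coalgebra.comul (R := k) (b i : C) = ∑ j ∈ s i, (b j : C) ⊗ₜ[k] a j i)
    {v : C} (hv : v ∈ V) :
    Coalgebra.comul (R := k) v ∈ LinearMap.range
      (mapIncl V (Submodule.span k {x : C | ∃ i j, j ∈ s i ∧ x = a j i})) := by
  have hbasis : Set.range b ⊆ (LinearMap.range (mapIncl V (Submodule.span k
      {x : C | ∃ i j, j ∈ s i ∧ x = a j i}))).comap (Coalgebra.comul ∘ₗ V.subtype) := by
    rintro _ ⟨i, rfl⟩
    rw [SetLike.mem_coe, Submodule.mem_comap, LinearMap.comp_apply, V.subtype_apply, ha i]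
    exact Submodule.sum_mem _ fun j hj =>
      tmul_mem_range_mapIncl (b j).2 (Submodule.subset_span ⟨i, j, hj, rfl⟩)
  have hall := Submodule.span_le.2 hbasis
  rw [b.span_eq] at hall
  exact hall (Submodule.mem_top (x := ⟨v, hv⟩))

lemma exists_coeff_eq_contractFst
    (ha : ∀ i, Coalgebra.comul (R := k) (b i : C) = ∑ j ∈ s i, (b j : C) ⊗ₜ[k] a j i)
    {i j : ι} (hj : j ∈ s i) :
    ∃ f : C →ₗ[k] k, a j i = contractFst f (Coalgebra.comul (R := k) (b i : C)) := by
  classical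
  obtain ⟨f, hf⟩ := exists_extend_coord b j
  exact ⟨f, by rw [ha i, contractFst_sum_tmul hf, if_pos hj]⟩

lemma coeffSpan_eq_span_coeff
    (ha : ∀ i, Coalgebra.comul (R := k) (b i : C) = ∑ j ∈ s i, (b j : C) ⊗ₜ[k] a j i) :
    coeffSpan V = Submodule.span k {x : C | ∃ i j, j ∈ s i ∧ x = a j i} := by
  refine le_antisymm (sInf_le fun v hv => comul_mem_range_mapIncl_span_coeff ha hv) ?_
  rw [Submodule.span_le]
  rintro _ ⟨i, j, hj, rfl⟩
  obtain ⟨f, hf⟩ := exists_coeff_eq_contractFst ha hj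
  exact Submodule.mem_sInf.2 fun S hS =>
    hf ▸ contractFst_mem_of_mem_range_mapIncl f (hS _ (b i).2)

lemma comul_coeff_mem_range_mapIncl
    (ha : ∀ i, Coalgebra.comul (R := k) (b i : C) = ∑ j ∈ s i, (b j : C) ⊗ₜ[k] a j i)
    {i j : ι} (hj : j ∈ s i) :
    Coalgebra.comul (R := k) (a j i) ∈ LinearMap.range
      (mapIncl (Submodule.span k {x : C | ∃ i j, j ∈ s i ∧ x = a j i})
        (Submodule.span k {x : C | ∃ i j, j ∈ s i ∧ x = a j i})) := by
  obtain ⟨f, hf⟩ := exists_coeff_eq_contractFst ha hj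
  have hcomul : Coalgebra.comul (R := k) (a j i) =
      ∑ l ∈ s i, ∑ m ∈ s l, f (b m : C) • (a m l ⊗ₜ[k] a l i) := by
    rw [hf, ← contractFst_lTensor, ← Coalgebra.coassoc_apply, ha i]
    simp [ha, sum_tmul]
  rw [hcomul]
  exact Submodule.sum_mem _ fun l hl => Submodule.sum_mem _ fun m hm =>
    Submodule.smul_mem _ _ (tmul_mem_range_mapIncl (Submodule.subset_span ⟨l, m, hm, rfl⟩)
      (Submodule.subset_span ⟨i, l, hl, rfl⟩))

lemma isSubcoalgebra_span_coeff
    (ha : ∀ i, Coalgebra.comul (R := k) (b i : C) = ∑ j ∈ s i, (b j : C) ⊗ₜ[k] a j i) :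
    IsSubcoalgebra (Submodule.span k {x : C | ∃ i j, j ∈ s i ∧ x = a j i}) := by
  intro x hx
  refine Submodule.mem_comap.1 (Submodule.span_le.2 ?_ hx)
  rintro _ ⟨_, _, hj, rfl⟩
  exact comul_coeff_mem_range_mapIncl ha hj

end Coefficients

lemma IsSubcomodule.sup {N D : Type} [AddCommGroup N] [Module k N] [AddCommGroup D]
    [Module k D] {β : N →ₗ[k] N ⊗[k] D} {W₁ W₂ : Submodule k N} (h₁ : IsSubcomodule β W₁)
    (h₂ : IsSubcomodule β W₂) : IsSubcomodule β (W₁ ⊔ W₂) := by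
  intro w hw
  obtain ⟨y, hy, z, hz, rfl⟩ := Submodule.mem_sup.1 hw
  rw [map_add]
  exact add_mem (range_rTensor_subtype_mono le_sup_left (h₁ y hy))
    (range_rTensor_subtype_mono le_sup_right (h₂ z hz))

section Subcomodule

variable {W : Submodule k C}

lemma IsSubcomodule.exists_comul_eq_sum
    (hW : IsSubcomodule (Coalgebra.comul (R := k) (A := C)) W) {ι : Type}
    (b : Module.Basis ι k W) :
    ∃ (s : ι → Finset ι) (a : ι → ι → C),
      ∀ i, Coalgebra.comul (R := k) (b i : C) = ∑ j ∈ s i, (b j : C) ⊗ₜ[k] a j i := by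
  have hrow : ∀ i, ∃ (t : Finset ι) (c : ι → C),
      Coalgebra.comul (R := k) (b i : C) = ∑ j ∈ t, (b j : C) ⊗ₜ[k] c j := by
    intro i
    obtain ⟨w, hw⟩ := hW _ (b i).2
    obtain ⟨t, c, rfl⟩ := exists_eq_sum_basis_tmul b w
    exact ⟨t, c, by simp [← hw]⟩
  choose s a ha using hrow
  exact ⟨s, fun j i => a i j, ha⟩

lemma IsSubcomodule.contractFst_comul_mem_coeffSpan
    (hW : IsSubcomodule (Coalgebra.comul (R := k) (A := C)) W) {w : C} (hw : w ∈ W)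
    (f : C →ₗ[k] k) : contractFst f (Coalgebra.comul (R := k) w) ∈ coeffSpan W := by
  obtain ⟨s, a, ha⟩ := hW.exists_comul_eq_sum (Module.Basis.ofVectorSpace k W)
  rw [coeffSpan_eq_span_coeff ha]
  exact contractFst_mem_of_mem_range_mapIncl f (comul_mem_range_mapIncl_span_coeff ha hw)

lemma IsSubcomodule.coeffSpan_mono
    (hW : IsSubcomodule (Coalgebra.comul (R := k) (A := C)) W) {W' : Submodule k C}
    (hW' : IsSubcomodule (Coalgebra.comul (R := k) (A := C)) W') (h : W ≤ W') :
    coeffSpan W ≤ coeffSpan W' := by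
  obtain ⟨s, a, ha⟩ := hW.exists_comul_eq_sum (Module.Basis.ofVectorSpace k W)
  rw [coeffSpan_eq_span_coeff ha, Submodule.span_le]
  rintro _ ⟨i, j, hj, rfl⟩
  obtain ⟨f, hf⟩ := exists_coeff_eq_contractFst ha hj
  exact hf ▸ hW'.contractFst_comul_mem_coeffSpan (h (Module.Basis.ofVectorSpace k W i).2) f

lemma IsSubcomodule.isSubcoalgebra_coeffSpan
    (hW : IsSubcomodule (Coalgebra.comul (R := k) (A := C)) W) :
    IsSubcoalgebra (coeffSpan W) := by
  obtain ⟨s, a, ha⟩ := hW.exists_comul_eq_sum (Module.Basis.ofVectorSpace k W)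
  rw [coeffSpan_eq_span_coeff ha]
  exact isSubcoalgebra_span_coeff ha

lemma IsSubcomodule.finiteDimensional_coeffSpan
    (hW : IsSubcomodule (Coalgebra.comul (R := k) (A := C)) W) [FiniteDimensional k W] :
    FiniteDimensional k (coeffSpan W) := by
  obtain ⟨s, a, ha⟩ := hW.exists_comul_eq_sum (Module.finBasis k W)
  rw [coeffSpan_eq_span_coeff ha]
  refine FiniteDimensional.span_of_finite k
    ((Set.finite_range fun p : _ × _ => a p.1 p.2).subset ?_)
  rintro _ ⟨i, j, -, rfl⟩
  exact ⟨(j, i), rfl⟩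

end Subcomodule

lemma comul_eq_sum_tmul_contractSnd_comul {ι : Type} [DecidableEq ι] (B : Module.Basis ι k C)
    {c : C} {t : Finset ι} {m : ι → C}
    (hc : Coalgebra.comul (R := k) c = ∑ l ∈ t, m l ⊗ₜ[k] B l) {j : ι} (hj : j ∈ t) :
    Coalgebra.comul (R := k) (m j) =
      ∑ l ∈ t, m l ⊗ₜ[k] contractSnd (B.coord j) (Coalgebra.comul (R := k) (B l)) :=
  calc Coalgebra.comul (R := k) (m j)
      = contractSnd (B.coord j) (Coalgebra.comul.rTensor C (Coalgebra.comul (R := k) c)) := by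
        rw [hc, map_sum]
        simp only [LinearMap.rTensor_tmul]
        rw [contractSnd_sum_tmul (fun l => B.repr_self_apply l j), if_pos hj]
    _ = contractSnd (B.coord j) ((TensorProduct.assoc k C C C).symm
          (Coalgebra.comul.lTensor C (Coalgebra.comul (R := k) c))) := by
        rw [Coalgebra.coassoc_symm_apply]
    _ = _ := by
        rw [hc]
        simp [contractSnd_assoc_symm]

lemma exists_finiteDimensional_subcomodule_mem (c : C) :
    ∃ W : Submodule k C, IsSubcomodule (Coalgebra.comul (R := k) (A := C)) W ∧
      FiniteDimensional k W ∧ c ∈ W := by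
  classical
  let B := Module.Basis.ofVectorSpace k C
  obtain ⟨t, m, hc⟩ := exists_eq_sum_tmul_basis B (Coalgebra.comul (R := k) c)
  refine ⟨Submodule.span k (m '' t), ?_,
    FiniteDimensional.span_of_finite k (t.finite_toSet.image m), ?_⟩
  · intro w hw
    refine Submodule.mem_comap.1 (Submodule.span_le.2 ?_ hw)
    rintro _ ⟨j, hj, rfl⟩
    rw [SetLike.mem_coe, Submodule.mem_comap,
      comul_eq_sum_tmul_contractSnd_comul B hc (Finset.mem_coe.1 hj)]
    exact Submodule.sum_mem _ fun l hl => ⟨⟨m l, Submodule.subset_span ⟨l, hl, rfl⟩⟩ ⊗ₜ _, rfl⟩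
  · rw [← contractSnd_counit_comul (k := k) c, hc, map_sum]
    exact Submodule.sum_mem _ fun j hj => by
      simpa using Submodule.smul_mem _ _ (Submodule.subset_span (Set.mem_image_of_mem m hj))

theorem subcomodule_contained_in_coefficients_general
    (V : Submodule k C)
    {ι : Type} (b : Module.Basis ι k V) (s : ι → Finset ι) (a : ι → ι → C)
    (ha : ∀ i, Coalgebra.comul (R := k) (b i : C) = ∑ j ∈ s i, (b j : C) ⊗ₜ[k] a j i) :
    (∀ i, (b i : C) = ∑ j ∈ s i, Coalgebra.counit (R := k) (b j : C) • a j i) ∧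
    (coeffSpan V = Submodule.span k {x : C | ∃ i j, j ∈ s i ∧ x = a j i}) ∧
    (V ≤ coeffSpan V) ∧
    (∀ (W : Submodule k C), IsSubcomodule (Coalgebra.comul (R := k) (A := C)) W →
        FiniteDimensional k W →
      IsSubcoalgebra (coeffSpan W) ∧ FiniteDimensional k (coeffSpan W)) ∧
    (∀ (W₁ W₂ : Submodule k C),
        IsSubcomodule (Coalgebra.comul (R := k) (A := C)) W₁ → FiniteDimensional k W₁ →
        IsSubcomodule (Coalgebra.comul (R := k) (A := C)) W₂ → FiniteDimensional k W₂ →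
      ∃ W₃ : Submodule k C, IsSubcomodule (Coalgebra.comul (R := k) (A := C)) W₃ ∧
        FiniteDimensional k W₃ ∧ coeffSpan W₁ ≤ coeffSpan W₃ ∧ coeffSpan W₂ ≤ coeffSpan W₃) ∧
    ((⨆ (W : Submodule k C) (_ : IsSubcomodule (Coalgebra.comul (R := k) (A := C)) W ∧
        FiniteDimensional k W), coeffSpan W) = ⊤) := by
  refine ⟨eq_sum_counit_smul_coeff ha, coeffSpan_eq_span_coeff ha, le_coeffSpan V,
    fun W hW _ => ⟨hW.isSubcoalgebra_coeffSpan, hW.finiteDimensional_coeffSpan⟩,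
    fun W₁ W₂ hW₁ _ hW₂ _ => ?_, ?_⟩
  · have hW₃ := hW₁.sup hW₂
    exact ⟨W₁ ⊔ W₂, hW₃, inferInstance, hW₁.coeffSpan_mono hW₃ le_sup_left,
      hW₂.coeffSpan_mono hW₃ le_sup_right⟩
  · refine eq_top_iff.2 fun c _ => ?_
    obtain ⟨W, hW, hfin, hc⟩ := exists_finiteDimensional_subcomodule_mem (k := k) c
    exact le_iSup₂ (f := fun W _ => coeffSpan W) W ⟨hW, hfin⟩ (le_coeffSpan W hc)

/-- Every subcomodule `V` of a coalgebra `C` is contained in the span of its coefficients: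
if `{v i}` is a basis of `V` and `Δ (v i) = ∑ j, v j ⊗ a j i`, then
`v i = ∑ j, ε (v j) • a j i`; moreover the coefficient space of `V` is the span of the
`a j i`, and `V` lies inside it.  Consequently `C` is the directed union of the
finite-dimensional subcoalgebras formed by the coefficients of its
finite-dimensional subcomodules. -/
theorem subcomodule_contained_in_coefficients
    (V : Submodule k C) (hV : IsSubcomodule (Coalgebra.comul (R := k) (A := C)) V)
    {ι : Type} (b : Module.Basis ι k V) (s : ι → Finset ι) (a : ι → ι → C)
    (ha : ∀ i, Coalgebra.comul (R := k) (b i : C) = ∑ j ∈ s i, (b j : C) ⊗ₜ[k] a j i) :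
    (∀ i, (b i : C) = ∑ j ∈ s i, Coalgebra.counit (R := k) (b j : C) • a j i) ∧
    (coeffSpan V = Submodule.span k {x : C | ∃ i j, j ∈ s i ∧ x = a j i}) ∧
    (V ≤ coeffSpan V) ∧
    (∀ (W : Submodule k C), IsSubcomodule (Coalgebra.comul (R := k) (A := C)) W →
        FiniteDimensional k W →
      IsSubcoalgebra (coeffSpan W) ∧ FiniteDimensional k (coeffSpan W)) ∧
    (∀ (W₁ W₂ : Submodule k C),
        IsSubcomodule (Coalgebra.comul (R := k) (A := C)) W₁ → FiniteDimensional k W₁ →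
        IsSubcomodule (Coalgebra.comul (R := k) (A := C)) W₂ → FiniteDimensional k W₂ →
      ∃ W₃ : Submodule k C, IsSubcomodule (Coalgebra.comul (R := k) (A := C)) W₃ ∧
        FiniteDimensional k W₃ ∧ coeffSpan W₁ ≤ coeffSpan W₃ ∧ coeffSpan W₂ ≤ coeffSpan W₃) ∧
    ((⨆ (W : Submodule k C) (_ : IsSubcomodule (Coalgebra.comul (R := k) (A := C)) W ∧
        FiniteDimensional k W), coeffSpan W) = ⊤) :=
  subcomodule_contained_in_coefficients_general V b s a ha

end SuperCoalg
end
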